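/- arXiv:2510.00901 — 2 statements merged into one kernel-verified Lean document; each statement's English description precedes it below -/
import Mathlib

section
/- Let R be a ring with identity, a, b, c ∈ R and j_a, j_b, j_c ∈ J(R). Suppose a^{‖(b,c)} exists, b⁺ and c⁺ are reflexive inverses of b and c, and that (1 − b·b⁺)·j_b·(1 + b⁺·j_b)⁻¹·(1 − b⁺·b) = 0 and (1 − c·c⁺)·j_c·(1 + c⁺·j_c)⁻¹·(1 − c⁺·c) = 0. Set j := j_a + a·j_b·b⁺ + c⁺·j_c·a + j_a·j_b·b⁺ + c⁺·j_c·j_a + c⁺·j_c·a·j_b·b⁺ + c⁺·j_c·j_a·j_b·b⁺. Then 1 + j·a^{‖(b,c)} is a unit and the (b + j_b, c + j_c)-inverse of a + j_a exists and equals (1 + j_b·b⁺)·a^{‖(b,c)}·(1 + j·a^{‖(b,c)})⁻¹·(1 + c⁺·j_c). -/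
/-! The (b,c)-inverse of `a + j_a` is obtained from that of `a` in three moves. Since `b + j_b`
and `(1 + j_b b⁺) b` generate the same right ideal, and `c + j_c` and `c (1 + c⁺ j_c)` the same
left ideal (this is what the two vanishing hypotheses give), the wanted inverse is the
`((1 + j_b b⁺) b, c (1 + c⁺ j_c))`-inverse of `a + j_a`. Conjugating by the units `1 + j_b b⁺`
and `1 + c⁺ j_c` turns it into the (b,c)-inverse of `(1 + c⁺ j_c) (a + j_a) (1 + j_b b⁺) = a + j`,
and for any `j` with `1 + j y` a unit the (b,c)-inverse of `a + j` is `y (1 + j y)⁻¹`. -/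

/-- `y` is the (b,c)-inverse of `a`: `c*a*y = c`, `y*a*b = b`, `y ∈ bR ∩ Rc`. -/
def IsBCInverse {R : Type*} [Ring R] (a b c y : R) : Prop :=
  c * a * y = c ∧ y * a * b = b ∧ (∃ s, y = b * s) ∧ (∃ t, y = t * c)

section Jacobson

variable {R : Type*} [Ring R]

theorem exists_mul_one_add_eq_one_of_mem_jacobson_bot {x : R}
    (hx : x ∈ Ideal.jacobson (⊥ : Ideal R)) : ∃ z, z * (1 + x) = 1 := by
  obtain ⟨z, hz⟩ := Ideal.mem_jacobson_iff.1 hx 1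
  rw [Ideal.mem_bot, mul_one] at hz
  exact ⟨z, by linear_combination (norm := noncomm_ring) hz⟩

theorem isUnit_one_add_of_mem_jacobson_bot {x : R}
    (hx : x ∈ Ideal.jacobson (⊥ : Ideal R)) : IsUnit (1 + x) := by
  obtain ⟨z, hz⟩ := exists_mul_one_add_eq_one_of_mem_jacobson_bot hx
  -- `z = 1 - z x` is itself of the form `1 + (radical element)`, so it has a left inverse `w`.
  obtain ⟨w, hw⟩ := exists_mul_one_add_eq_one_of_mem_jacobson_bot
    (neg_mem (Ideal.mul_mem_left _ z hx))
  have hwz : w * z = 1 := by linear_combination (norm := noncomm_ring) hw + w * hz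
  have hw_eq : w = 1 + x := by
    calc w = w * z * (1 + x) := by rw [mul_assoc, hz, mul_one]
      _ = 1 + x := by rw [hwz, one_mul]
  exact ⟨⟨1 + x, z, hw_eq ▸ hwz, hz⟩, rfl⟩

end Jacobson

namespace IsBCInverse

variable {R : Type*} [Ring R] {a b c y : R}

theorem add_mul_inverse (hy : IsBCInverse a b c y) (j : R) (hu : IsUnit (1 + j * y)) :
    IsBCInverse (a + j) b c (y * Ring.inverse (1 + j * y)) := by
  obtain ⟨hcay, hyab, ⟨s, hs⟩, ⟨t, ht⟩⟩ := hy
  have hcu : c * (a + j) * y = c * (1 + j * y) := by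
    linear_combination (norm := noncomm_ring) hcay
  have hub : (a + j) * b = (1 + j * y) * (a * b) := by
    linear_combination (norm := noncomm_ring) (-j) * hyab
  refine ⟨?_, ?_, ⟨s * Ring.inverse (1 + j * y), by rw [hs, mul_assoc]⟩,
    ⟨t - t * c * Ring.inverse (1 + j * y) * j * t, ?_⟩⟩
  · rw [← mul_assoc, hcu, Ring.mul_inverse_cancel_right _ _ hu]
  · rw [mul_assoc, mul_assoc, hub, Ring.inverse_mul_cancel_left _ _ hu, ← mul_assoc, hyab]
  · subst ht
    linear_combination (norm := noncomm_ring) (t * c) * Ring.inverse_mul_cancel _ hu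

theorem units_mul_mul (hy : IsBCInverse a b c y) (p q : Rˣ) :
    IsBCInverse (↑p⁻¹ * a * ↑q⁻¹) (q * b) (c * p) (q * y * p) := by
  obtain ⟨hcay, hyab, ⟨s, rfl⟩, ⟨t, ht⟩⟩ := hy
  refine ⟨?_, ?_, ⟨s * p, by noncomm_ring⟩, ⟨q * t, by rw [ht]; noncomm_ring⟩⟩
  · calc c * p * (↑p⁻¹ * a * ↑q⁻¹) * (q * (b * s) * p) = c * a * (b * s) * p := by
          simp only [mul_assoc, Units.mul_inv_cancel_left, Units.inv_mul_cancel_left]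
      _ = c * p := by rw [hcay]
  · calc q * (b * s) * p * (↑p⁻¹ * a * ↑q⁻¹) * (q * b) = q * (b * s * a * b) := by
          simp only [mul_assoc, Units.mul_inv_cancel_left, Units.inv_mul_cancel_left]
      _ = q * b := by rw [hyab]

theorem of_eq_mul (hy : IsBCInverse a b c y) {b' c' : R} (hb' : ∃ r, b' = b * r)
    (hb : ∃ r, b = b' * r) (hc' : ∃ r, c' = r * c) (hc : ∃ r, c = r * c') :
    IsBCInverse a b' c' y := by
  obtain ⟨hcay, hyab, ⟨s, hs⟩, ⟨t, ht⟩⟩ := hy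
  obtain ⟨r₁, hr₁⟩ := hb'
  obtain ⟨r₂, hr₂⟩ := hc'
  obtain ⟨r₃, hr₃⟩ := hb
  obtain ⟨r₄, hr₄⟩ := hc
  refine ⟨?_, ?_, ⟨r₃ * s, ?_⟩, ⟨t * r₄, ?_⟩⟩
  · rw [hr₂, mul_assoc, mul_assoc, ← mul_assoc c, hcay]
  · rw [hr₁, ← mul_assoc, hyab]
  · rw [hs, hr₃, mul_assoc]
  · rw [ht, hr₄, mul_assoc]

end IsBCInverse

section RegularPerturbation

variable {R : Type*} [Ring R]

theorem add_eq_one_add_mul_mul_mul {b bp jb v : R} (hv : (1 + bp * jb) * v = 1)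
    (h0 : (1 - b * bp) * jb * v * (1 - bp * b) = 0) :
    b + jb = (1 + jb * bp) * b * (1 + bp * jb * v * (1 - bp * b)) := by
  linear_combination (norm := noncomm_ring) (1 + jb * bp) * h0 - jb * hv * (1 - bp * b)

theorem add_eq_mul_mul_one_add {c cp jc w : R} (hw : w * (1 + cp * jc) = 1)
    (h0 : (1 - c * cp) * jc * w * (1 - cp * c) = 0) :
    c + jc = (1 + (1 - c * cp) * jc * w * cp) * (c * (1 + cp * jc)) := by
  linear_combination (norm := noncomm_ring) h0 * (1 + cp * jc) - (1 - c * cp) * jc * hw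

end RegularPerturbation

/-- under the hypotheses, with
`j = j_a + a j_b b⁺ + c⁺ j_c a + j_a j_b b⁺ + c⁺ j_c j_a + c⁺ j_c a j_b b⁺ + c⁺ j_c j_a j_b b⁺`,
the element `1 + j * a^{‖(b,c)}` is a unit and
`(a + j_a)^{‖(b+j_b, c+j_c)} = (1 + j_b b⁺) a^{‖(b,c)} (1 + j a^{‖(b,c)})⁻¹ (1 + c⁺ j_c)`. -/
theorem stmt2 {R : Type*} [Ring R] (a b c y bp cp ja jb jc : R)
    (hja : ja ∈ Ideal.jacobson (⊥ : Ideal R))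
    (hjb : jb ∈ Ideal.jacobson (⊥ : Ideal R))
    (hjc : jc ∈ Ideal.jacobson (⊥ : Ideal R))
    (hy : IsBCInverse a b c y)
    (hbp : b * bp * b = b ∧ bp * b * bp = bp)
    (hcp : c * cp * c = c ∧ cp * c * cp = cp)
    (hb0 : (1 - b * bp) * jb * Ring.inverse (1 + bp * jb) * (1 - bp * b) = 0)
    (hc0 : (1 - c * cp) * jc * Ring.inverse (1 + cp * jc) * (1 - cp * c) = 0) :
    ∀ j : R, j = ja + a * jb * bp + cp * jc * a + ja * jb * bp + cp * jc * ja
        + cp * jc * a * jb * bp + cp * jc * ja * jb * bp →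
      IsUnit (1 + j * y) ∧
      IsBCInverse (a + ja) (b + jb) (c + jc)
        ((1 + jb * bp) * y * Ring.inverse (1 + j * y) * (1 + cp * jc)) := by
  intro j hj
  have hjJ : j ∈ Ideal.jacobson (⊥ : Ideal R) := by
    rw [← Ideal.Quotient.eq_zero_iff_mem, hj]
    simp only [map_add, map_mul, Ideal.Quotient.eq_zero_iff_mem.2 hja,
      Ideal.Quotient.eq_zero_iff_mem.2 hjb, Ideal.Quotient.eq_zero_iff_mem.2 hjc, mul_zero,
      zero_mul, add_zero]
  have hu : IsUnit (1 + j * y) := isUnit_one_add_of_mem_jacobson_bot (Ideal.mul_mem_right y _ hjJ)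
  refine ⟨hu, ?_⟩
  obtain ⟨β, hβ⟩ : IsUnit (1 + jb * bp) :=
    isUnit_one_add_of_mem_jacobson_bot (Ideal.mul_mem_right bp _ hjb)
  obtain ⟨γ, hγ⟩ : IsUnit (1 + cp * jc) :=
    isUnit_one_add_of_mem_jacobson_bot (Ideal.mul_mem_left _ cp hjc)
  have hv : IsUnit (1 + bp * jb) :=
    isUnit_one_add_of_mem_jacobson_bot (Ideal.mul_mem_left _ bp hjb)
  have ha : ↑γ⁻¹ * (a + j) * ↑β⁻¹ = a + ja := by
    rw [show a + j = γ * (a + ja) * β by rw [hγ, hβ, hj]; noncomm_ring]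
    simp only [mul_assoc, Units.inv_mul_cancel_left, Units.mul_inv, mul_one]
  have key := (hy.add_mul_inverse j hu).units_mul_mul γ β
  rw [ha, hγ, hβ] at key
  simpa only [mul_assoc] using key.of_eq_mul
    ⟨_, add_eq_one_add_mul_mul_mul (Ring.mul_inverse_cancel _ hv) hb0⟩
    ⟨bp * b, by linear_combination (norm := noncomm_ring) -hbp.1⟩
    ⟨_, add_eq_mul_mul_one_add (Ring.inverse_mul_cancel _ ⟨γ, hγ⟩) hc0⟩
    ⟨c * cp, by linear_combination (norm := noncomm_ring) -hcp.1⟩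
end

section
/- Let R be a ring with identity, a ∈ R and j ∈ J(R). Suppose a has a reflexive inverse a⁺ which is group invertible (so that a is special clean). Then the following are equivalent: (1) a + j is special clean; (2) a + j is regular; (3) (1 − a·a⁺)·j·(1 + a⁺·j)⁻¹·(1 − a⁺·a) = 0. In this case, (1 + a⁺·j)⁻¹·a⁺ is a reflexive inverse of a + j which is group invertible, and the map x ↦ (1 + x·j)⁻¹·x is a bijection from the set of group invertible reflexive inverses of a onto the set of group invertible reflexive inverses of a + j. -/
/-- `x` is the group inverse of `a`. -/
def IsGroupInverse {R : Type*} [Ring R] (a x : R) : Prop :=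
  a * x * a = a ∧ x * a * x = x ∧ a * x = x * a

/-- `x` is special clean: `x = e + u` with `e` idempotent, `u` a unit and
`xR ∩ eR = {0}`. -/
def IsSpecialClean {R : Type*} [Ring R] (x : R) : Prop :=
  ∃ e u : R, IsIdempotentElem e ∧ IsUnit u ∧ x = e + u ∧
    {z : R | ∃ r, z = x * r} ∩ {z : R | ∃ r, z = e * r} = {0}

section Helpers
variable {R : Type*} [Ring R]

theorem unit_swap (a b : R) (h : IsUnit (1 + a * b)) : IsUnit (1 + b * a) := by
  set v := Ring.inverse (1 + a * b) with hv
  have h1 : (1 + a * b) * v = 1 := Ring.mul_inverse_cancel _ h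
  have h2 : v * (1 + a * b) = 1 := Ring.inverse_mul_cancel _ h
  refine isUnit_iff_exists.mpr ⟨1 - b * v * a, ?_, ?_⟩
  · calc (1 + b*a) * (1 - b*v*a) = 1 + b*a - b*((1+a*b)*v)*a := by noncomm_ring
    _ = 1 := by rw [h1]; all_goals noncomm_ring
  · calc (1 - b*v*a) * (1 + b*a) = 1 + b*a - b*(v*(1+a*b))*a := by noncomm_ring
    _ = 1 := by rw [h2]; all_goals noncomm_ring

theorem inv_transport {A B : R} (x : R) (hA : IsUnit A) (hB : IsUnit B) (h : A * x = x * B) :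
    Ring.inverse A * x = x * Ring.inverse B := by
  calc Ring.inverse A * x = Ring.inverse A * x * (B * Ring.inverse B) := by
        rw [Ring.mul_inverse_cancel _ hB, mul_one]
  _ = Ring.inverse A * (A * x) * Ring.inverse B := by rw [h]; all_goals noncomm_ring
  _ = x * Ring.inverse B := by rw [← mul_assoc, Ring.inverse_mul_cancel _ hA, one_mul]

variable {k : R} (hk : ∀ r : R, IsUnit (1 + r * k))

include hk in
theorem unit_kr (r : R) : IsUnit (1 + k * r) := unit_swap r k (hk r)

include hk in
theorem unit_rks (r s : R) : IsUnit (1 + r * (k * s)) := by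
  have h2 : IsUnit (1 + k * (s * r)) := unit_kr hk (s*r)
  have h3 : (1 : R) + k * (s*r) = 1 + (k*s)*r := by rw [mul_assoc]
  rw [h3] at h2
  exact unit_swap (k*s) r h2

end Helpers

section Main
variable {R : Type*} [Ring R] {c x k : R} (hk : ∀ r : R, IsUnit (1 + r * k))

-- y (c+k) y = y, unconditionally
include hk in
theorem mainA (hxc : x*c*x = x) :
    (Ring.inverse (1+x*k)*x) * (c+k) * (Ring.inverse (1+x*k)*x) = Ring.inverse (1+x*k)*x := by
  set v := Ring.inverse (1+x*k) with hv
  have hu : IsUnit (1+x*k) := hk x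
  have huv : (1+x*k) * v = 1 := Ring.mul_inverse_cancel _ hu
  have hvu : v * (1+x*k) = 1 := Ring.inverse_mul_cancel _ hu
  have s1 : (1 - x*c) * (1 + x*k) = 1 - x*c := by
    calc (1 - x*c)*(1 + x*k) = 1 + x*k - x*c - (x*c*x)*k := by noncomm_ring
    _ = 1 - x*c := by rw [hxc]; all_goals noncomm_ring
  have s2 : (1 - x*c) * v = 1 - x*c := by
    conv_lhs => rw [← s1]
    rw [mul_assoc, huv, mul_one]
  have s3 : x*(c+k) = (1+x*k) - (1 - x*c) := by noncomm_ring
  have s4 : (1 - x*c)*x = 0 := by rw [sub_mul, one_mul, sub_eq_zero]; exact hxc.symm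
  calc (v*x)*(c+k)*(v*x) = v*(x*(c+k))*(v*x) := by noncomm_ring
  _ = v*((1+x*k) - (1-x*c))*(v*x) := by rw [s3]
  _ = (v*(1+x*k))*(v*x) - v*(((1-x*c)*v)*x) := by noncomm_ring
  _ = v*x - v*((1-x*c)*x) := by rw [hvu, one_mul, s2]
  _ = v*x := by rw [s4, mul_zero, sub_zero]

-- (c+k) y (c+k) = (c+k) - w
include hk in
theorem mainB (hcx : c*x*c = c) :
    (c+k) * (Ring.inverse (1+x*k)*x) * (c+k)
      = (c+k) - (1-c*x)*k*Ring.inverse (1+x*k)*(1-x*c) := by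
  set v := Ring.inverse (1+x*k) with hv
  have hu : IsUnit (1+x*k) := hk x
  have huv : (1+x*k) * v = 1 := Ring.mul_inverse_cancel _ hu
  have hvu : v * (1+x*k) = 1 := Ring.inverse_mul_cancel _ hu
  have s3 : x*(c+k) = (1+x*k) - (1 - x*c) := by noncomm_ring
  have s5 : (c+k) = c*(1+x*k) + (1-c*x)*k := by noncomm_ring
  have s6 : (c+k)*v = c + (1-c*x)*k*v := by
    conv_lhs => rw [s5]
    rw [add_mul, mul_assoc, huv, mul_one, mul_assoc]
  have s7 : c*(1-x*c) = 0 := by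
    rw [mul_sub, mul_one, sub_eq_zero, ← mul_assoc]; exact hcx.symm
  calc (c+k)*(v*x)*(c+k) = (c+k)*(v*(x*(c+k))) := by noncomm_ring
  _ = (c+k)*(v*((1+x*k) - (1-x*c))) := by rw [s3]
  _ = (c+k)*(v*(1+x*k)) - ((c+k)*v)*(1-x*c) := by noncomm_ring
  _ = (c+k) - (c + (1-c*x)*k*v)*(1-x*c) := by rw [hvu, mul_one, s6]
  _ = (c+k) - c*(1-x*c) - (1-c*x)*k*v*(1-x*c) := by noncomm_ring
  _ = (c+k) - (1-c*x)*k*v*(1-x*c) := by rw [s7, sub_zero]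

-- regularity of c+k forces w = 0
include hk in
theorem mainC (hcx : c*x*c = c) (hxc : x*c*x = x) (z : R)
    (hz : (c+k)*z*(c+k) = c+k) :
    (1-c*x)*k*Ring.inverse (1+x*k)*(1-x*c) = 0 := by
  set v := Ring.inverse (1+x*k) with hv
  set v' := Ring.inverse (1+k*x) with hv'
  have hu : IsUnit (1+x*k) := hk x
  have hu' : IsUnit (1+k*x) := unit_kr hk x
  have huv : (1+x*k) * v = 1 := Ring.mul_inverse_cancel _ hu
  have hvu : v * (1+x*k) = 1 := Ring.inverse_mul_cancel _ hu
  have hv'u : v' * (1+k*x) = 1 := Ring.inverse_mul_cancel _ hu'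
  set w := (1-c*x)*k*v*(1-x*c) with hw
  have s4 : (1 - x*c)*x = 0 := by rw [sub_mul, one_mul, sub_eq_zero]; exact hxc.symm
  have s7 : c*(1-x*c) = 0 := by
    rw [mul_sub, mul_one, sub_eq_zero, ← mul_assoc]; exact hcx.symm
  have t1 : (1+k*x)*k = k*(1+x*k) := by noncomm_ring
  have t2 : v'*k = k*v := inv_transport k hu' hu t1
  have t3 : (c+k) = (1+k*x)*c + k*(1-x*c) := by noncomm_ring
  have t4 : (1-c*x)*v'*(c+k) = w := by
    calc (1-c*x)*v'*(c+k) = (1-c*x)*(v'*((1+k*x)*c)) + (1-c*x)*((v'*k)*(1-x*c)) := by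
          conv_lhs => rw [t3]
          noncomm_ring
    _ = (1-c*x)*((v'*(1+k*x))*c) + (1-c*x)*((k*v)*(1-x*c)) := by rw [t2]; all_goals noncomm_ring
    _ = (1-c*x)*c + w := by rw [hv'u, one_mul, hw]; all_goals noncomm_ring
    _ = w := by
          have : (1-c*x)*c = 0 := by rw [sub_mul, one_mul, sub_eq_zero]; exact hcx.symm
          rw [this, zero_add]
  have s6 : (c+k)*v = c + (1-c*x)*k*v := by
    have s5 : (c+k) = c*(1+x*k) + (1-c*x)*k := by noncomm_ring
    conv_lhs => rw [s5]
    rw [add_mul, mul_assoc, huv, mul_one, mul_assoc]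
  have t5 : (c+k)*v*(1-x*c) = w := by
    rw [s6, add_mul, s7, zero_add, hw]; all_goals noncomm_ring
  have t5' : (c+k)*v = (c+k)*v*(x*c) + w := by
    rw [← t5]; all_goals noncomm_ring
  have t6 : c + k = ((c+k)*v*(x*c) + w)*(1+x*k) := by
    calc c+k = ((c+k)*v)*(1+x*k) := by rw [mul_assoc, hvu, mul_one]
    _ = ((c+k)*v*(x*c) + w)*(1+x*k) := by rw [← t5']
  have t7 : w = w*z*(c+k) := by
    calc w = (1-c*x)*v'*(c+k) := t4.symm
    _ = (1-c*x)*v'*((c+k)*z*(c+k)) := by rw [hz]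
    _ = ((1-c*x)*v'*(c+k))*z*(c+k) := by noncomm_ring
    _ = w*z*(c+k) := by rw [t4]
  have wx0 : w*x = 0 := by
    calc w*x = (1-c*x)*k*v*((1-x*c)*x) := by rw [hw]; all_goals noncomm_ring
    _ = 0 := by rw [s4, mul_zero]
  have w1xc : w*(1-x*c) = w := by
    calc w*(1-x*c) = w - (w*x)*c := by noncomm_ring
    _ = w := by rw [wx0, zero_mul, sub_zero]
  have hv1 : v = 1 - x*(k*v) := by
    have h' : v + x*(k*v) = 1 := by rw [← huv]; all_goals noncomm_ring
    calc v = (v + x*(k*v)) - x*(k*v) := by noncomm_ring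
    _ = 1 - x*(k*v) := by rw [h']
  have t10 : w*(v*(1-x*c)) = w := by
    calc w*(v*(1-x*c)) = w*((1 - x*(k*v))*(1-x*c)) := by rw [← hv1]
    _ = w*(1-x*c) - (w*x)*((k*v)*(1-x*c)) := by noncomm_ring
    _ = w := by rw [w1xc, wx0, zero_mul, sub_zero]
  have xc1xc : (x*c)*(1-x*c) = 0 := by
    calc (x*c)*(1-x*c) = x*c - x*(c*x*c) := by noncomm_ring
    _ = 0 := by rw [hcx]; all_goals noncomm_ring
  have t11 : w = w*z*w := by
    calc w = w*(v*(1-x*c)) := t10.symm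
    _ = (w*z*((c+k)*v*(x*c)*(1+x*k)) + w*z*(w*(1+x*k)))*(v*(1-x*c)) := by
          conv_lhs => rw [t7]
          conv_lhs => rw [t6]
          noncomm_ring
    _ = w*z*((c+k)*v*((x*c)*(((1+x*k)*v)*(1-x*c)))) + w*z*(w*(((1+x*k)*v)*(1-x*c))) := by
          noncomm_ring
    _ = w*z*((c+k)*v*((x*c)*(1-x*c))) + w*z*(w*(1-x*c)) := by rw [huv, one_mul]
    _ = w*z*w := by rw [xc1xc, mul_zero, mul_zero, zero_add, w1xc]
  have hzw : IsUnit (1 - z*w) := by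
    have h1 : IsUnit (1 + (-(z*((1-c*x)))) * (k*(v*(1-x*c)))) :=
      unit_rks hk _ _
    have h2 : (1:R) + (-(z*((1-c*x)))) * (k*(v*(1-x*c))) = 1 - z*w := by
      rw [hw]; all_goals noncomm_ring
    rwa [h2] at h1
  have hfin : w * (1 - z*w) = 0 := by
    calc w * (1 - z*w) = w - (w*z*w) := by noncomm_ring
    _ = 0 := by rw [← t11, sub_self]
  calc w = (w * (1 - z*w)) * Ring.inverse (1-z*w) := by
        conv_rhs => rw [mul_assoc, Ring.mul_inverse_cancel _ hzw, mul_one]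
  _ = 0 := by rw [hfin, zero_mul]

-- group invertibility of y = v x
include hk in
theorem mainE (g : R) (hg1 : x*g*x = x) (hg2 : g*x*g = g) (hg3 : x*g = g*x) :
    IsGroupInverse (Ring.inverse (1+x*k)*x) (g*(1+x*k*(x*g))) := by
  set v := Ring.inverse (1+x*k) with hv
  set m := x*k*(x*g) with hm
  set s := Ring.inverse (1+m) with hs
  have hu : IsUnit (1+x*k) := hk x
  have hkx : IsUnit (1+k*x) := unit_kr hk x
  have hum : IsUnit (1+m) := by
    have h := unit_rks hk x (x*g)
    have : (1:R) + x*(k*(x*g)) = 1 + m := by rw [hm]; all_goals noncomm_ring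
    rwa [this] at h
  have ha : (1 + x*k)*x = x*(1+k*x) := by noncomm_ring
  have hb : (1 + m)*x = x*(1+k*x) := by
    calc (1+m)*x = x + x*k*(x*g*x) := by rw [hm]; all_goals noncomm_ring
    _ = x + x*k*x := by rw [hg1]
    _ = x*(1+k*x) := by noncomm_ring
  have E1 : v*x = s*x := by
    rw [hv, hs, inv_transport x hu hkx ha, inv_transport x hum hkx hb]
  have pm : (x*g)*m = m := by
    calc (x*g)*m = (x*g*x)*(k*(x*g)) := by rw [hm]; all_goals noncomm_ring
    _ = m := by rw [hg1, hm]; all_goals noncomm_ring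
  have mp : m*(x*g) = m := by
    calc m*(x*g) = x*k*((x*g*x)*g) := by rw [hm]; all_goals noncomm_ring
    _ = m := by rw [hg1, hm]; all_goals noncomm_ring
  have hcomm : (1+m)*(x*g) = (x*g)*(1+m) := by
    calc (1+m)*(x*g) = x*g + m*(x*g) := by noncomm_ring
    _ = x*g + (x*g)*m := by rw [mp, pm]
    _ = (x*g)*(1+m) := by noncomm_ring
  have hsp : s*(x*g) = (x*g)*s := inv_transport (x*g) hum hum hcomm
  have hsm1 : s*(1+m) = 1 := Ring.inverse_mul_cancel _ hum
  have hms1 : (1+m)*s = 1 := Ring.mul_inverse_cancel _ hum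
  have hpg : (x*g)*g = g := by rw [hg3]; exact hg2
  have yh : (v*x)*(g*(1+m)) = x*g := by
    calc (v*x)*(g*(1+m)) = (s*x)*(g*(1+m)) := by rw [E1]
    _ = (s*(x*g))*(1+m) := by noncomm_ring
    _ = ((x*g)*s)*(1+m) := by rw [hsp]
    _ = (x*g)*(s*(1+m)) := by rw [mul_assoc]
    _ = x*g := by rw [hsm1, mul_one]
  have hy : (g*(1+m))*(v*x) = x*g := by
    calc (g*(1+m))*(v*x) = (g*(1+m))*(s*x) := by rw [E1]
    _ = g*(((1+m)*s)*x) := by noncomm_ring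
    _ = g*x := by rw [hms1, one_mul]
    _ = x*g := hg3.symm
  refine ⟨?_, ?_, ?_⟩
  · calc (v*x)*(g*(1+m))*(v*x) = (x*g)*(v*x) := by rw [yh]
    _ = (x*g)*(s*x) := by rw [E1]
    _ = ((x*g)*s)*x := by noncomm_ring
    _ = (s*(x*g))*x := by rw [hsp]
    _ = s*(x*g*x) := by noncomm_ring
    _ = s*x := by rw [hg1]
    _ = v*x := E1.symm
  · calc (g*(1+m))*(v*x)*(g*(1+m)) = (x*g)*(g*(1+m)) := by rw [hy]
    _ = ((x*g)*g)*(1+m) := by noncomm_ring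
    _ = g*(1+m) := by rw [hpg]
  · rw [yh, hy]

end Main

section SC
variable {R : Type*} [Ring R]

theorem reg_of_sc {c : R} (h : IsSpecialClean c) : ∃ y, c*y*c = c := by
  obtain ⟨e, u, he, hu, hce, hI⟩ := h
  set iu := Ring.inverse u with hiu
  have hui : u * iu = 1 := Ring.mul_inverse_cancel _ hu
  refine ⟨iu * (1 - e), ?_⟩
  set D := c - c*(iu*(1-e))*c with hD
  have h1 : D ∈ {z : R | ∃ r, z = c * r} := ⟨1 - (iu*(1-e))*c, by rw [hD]; all_goals noncomm_ring⟩
  have hu1e : u*(iu*(1-e)) = 1-e := by rw [← mul_assoc, hui, one_mul]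
  have hcy : c*(iu*(1-e)) = e*(iu*(1-e)) + (1-e) := by
    conv_lhs => rw [hce]
    rw [add_mul, hu1e]
  have h2 : D ∈ {z : R | ∃ r, z = e * r} := by
    refine ⟨c - iu*(1-e)*c, ?_⟩
    calc D = c - (c*(iu*(1-e)))*c := by rw [hD]; all_goals noncomm_ring
    _ = c - (e*(iu*(1-e)) + (1-e))*c := by rw [hcy]
    _ = e*(c - iu*(1-e)*c) := by noncomm_ring
  have hmem : D ∈ ({0} : Set R) := by rw [← hI]; exact ⟨h1, h2⟩
  have hD0 : D = 0 := hmem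
  have h3 : c - c*(iu*(1-e))*c = 0 := by rw [← hD]; exact hD0
  have := sub_eq_zero.mp h3
  exact this.symm

theorem sc_of_refl_grp {c b h : R} (h1 : c*b*c = c) (h2 : b*c*b = b)
    (hg : IsGroupInverse b h) : IsSpecialClean c := by
  obtain ⟨hbh, hhb, hcomm⟩ := hg
  have sqz : ∀ n : R, n*n = 0 → IsUnit (1+n) := by
    intro n hn
    refine isUnit_iff_exists.mpr ⟨1-n, ?_, ?_⟩
    · calc (1+n)*(1-n) = 1 - n*n := by noncomm_ring
      _ = 1 := by rw [hn, sub_zero]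
    · calc (1-n)*(1+n) = 1 - n*n := by noncomm_ring
      _ = 1 := by rw [hn, sub_zero]
  have hpp : (b*h)*(b*h) = b*h := by
    calc (b*h)*(b*h) = (b*h*b)*h := by noncomm_ring
    _ = b*h := by rw [hbh]
  have hpb : (b*h)*b = b := hbh
  have hbp : b*(b*h) = b := by rw [hcomm, ← mul_assoc, hbh]
  have hhb' : h*b = b*h := hcomm.symm
  have hph : (b*h)*h = h := by
    calc (b*h)*h = (h*b)*h := by rw [hhb']
    _ = h := hhb
  have hhp : h*(b*h) = h := by rw [← mul_assoc]; exact hhb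
  have hpcp : (b*h)*c*(b*h) = h := by
    calc (b*h)*c*(b*h) = (h*b)*c*(b*h) := by rw [hhb']
    _ = h*(b*c*b)*h := by noncomm_ring
    _ = h*b*h := by rw [h2]
    _ = h := hhb
  have hb1p : b*(1 - b*h) = 0 := by rw [mul_sub, mul_one, hbp, sub_self]
  have h1pb : (1 - b*h)*b = 0 := by rw [sub_mul, one_mul, hpb, sub_self]
  refine ⟨1 - b*h, c - 1 + b*h, ?_, ?_, by noncomm_ring, ?_⟩
  · show (1 - b*h) * (1 - b*h) = 1 - b*h
    calc (1-b*h)*(1-b*h) = 1 - b*h - b*h + (b*h)*(b*h) := by noncomm_ring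
    _ = 1 - b*h := by rw [hpp]; all_goals noncomm_ring
  · -- unit part
    have hA : IsUnit (1 + (1-b*h)*c*b) := by
      refine sqz _ ?_
      calc ((1-b*h)*c*b)*((1-b*h)*c*b) = (1-b*h)*c*(b*(1-b*h))*(c*b) := by noncomm_ring
      _ = 0 := by rw [hb1p, mul_zero, zero_mul]
    have hB : IsUnit (1 + b*c*(1-b*h)) := by
      refine sqz _ ?_
      calc (b*c*(1-b*h))*(b*c*(1-b*h)) = b*c*((1-b*h)*b)*(c*(1-b*h)) := by noncomm_ring
      _ = 0 := by rw [h1pb, mul_zero, zero_mul]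
    have hM : IsUnit (h - 1 + b*h) := by
      refine isUnit_iff_exists.mpr ⟨b - 1 + b*h, ?_, ?_⟩
      · calc (h-1+b*h)*(b-1+b*h)
            = h*b - h + h*(b*h) - b + 1 - b*h + (b*h)*b - b*h + (b*h)*(b*h) := by noncomm_ring
        _ = h*b - h + h - b + 1 - b*h + b - b*h + b*h := by rw [hhp, hpb, hpp]
        _ = 1 := by rw [hhb']; noncomm_ring
      · calc (b-1+b*h)*(h-1+b*h)
            = b*h - b + b*(b*h) - h + 1 - b*h + (b*h)*h - b*h + (b*h)*(b*h) := by noncomm_ring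
        _ = b*h - b + b - h + 1 - b*h + h - b*h + b*h := by rw [hbp, hph, hpp]
        _ = 1 := by noncomm_ring
    have step1 : (1 + (1-b*h)*c*b) * (h - 1 + b*h) = h - 1 + b*h + (1-b*h)*c*(b*h) := by
      calc (1 + (1-b*h)*c*b)*(h - 1 + b*h)
          = h - 1 + b*h + (1-b*h)*c*(b*h) - (1-b*h)*c*b + (1-b*h)*c*(b*(b*h)) := by noncomm_ring
      _ = h - 1 + b*h + (1-b*h)*c*(b*h) := by rw [hbp]; all_goals noncomm_ring
    have step2 : (h - 1 + b*h + (1-b*h)*c*(b*h)) * (1 + b*c*(1-b*h)) = c - 1 + b*h := by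
      calc (h - 1 + b*h + (1-b*h)*c*(b*h)) * (1 + b*c*(1-b*h))
          = h - 1 + b*h + (1-b*h)*c*(b*h) + (h*b)*(c*(1-b*h)) - b*c*(1-b*h)
            + ((b*h)*b)*(c*(1-b*h)) + (1-b*h)*c*(((b*h)*b)*(c*(1-b*h))) := by noncomm_ring
      _ = h - 1 + b*h + (1-b*h)*c*(b*h) + (b*h)*(c*(1-b*h)) - b*c*(1-b*h)
            + b*(c*(1-b*h)) + (1-b*h)*c*(b*(c*(1-b*h))) := by rw [hpb, hhb']
      _ = h - 1 + b*h + (1-b*h)*c*(b*h) + (b*h)*(c*(1-b*h)) + (1-b*h)*((c*b*c)*(1-b*h)) := by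
            noncomm_ring
      _ = h - 1 + b*h + (1-b*h)*c*(b*h) + (b*h)*(c*(1-b*h)) + (1-b*h)*(c*(1-b*h)) := by rw [h1]
      _ = (b*h)*c*(b*h) - 1 + b*h + (1-b*h)*c*(b*h) + (b*h)*(c*(1-b*h)) + (1-b*h)*(c*(1-b*h)) := by
            rw [hpcp]
      _ = c - 1 + b*h := by noncomm_ring
    have hprod := hA.mul (hM.mul hB)
    rwa [← mul_assoc, step1, step2] at hprod
  · -- intersection
    apply Set.eq_singleton_iff_unique_mem.mpr
    constructor
    · exact ⟨⟨0, (mul_zero c).symm⟩, ⟨0, (mul_zero (1 - b*h)).symm⟩⟩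
    · rintro z ⟨⟨r, hr⟩, ⟨s', hs'⟩⟩
      have hbz : b*z = 0 := by
        calc b*z = (b*(1-b*h))*s' := by rw [hs', mul_assoc]
        _ = 0 := by rw [hb1p, zero_mul]
      calc z = c*r := hr
      _ = (c*b*c)*r := by rw [h1]
      _ = c*(b*(c*r)) := by noncomm_ring
      _ = c*(b*z) := by rw [← hr]
      _ = 0 := by rw [hbz, mul_zero]

end SC


theorem jac_units {R : Type*} [Ring R] {j : R} (hj : j ∈ Ideal.jacobson (⊥ : Ideal R)) :
    ∀ r : R, IsUnit (1 + r * j) := by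
  have key : ∀ y : R, ∃ z : R, z * (1 + y * j) = 1 := by
    intro y
    obtain ⟨z, hz⟩ := Ideal.mem_jacobson_iff.mp hj y
    rw [Ideal.mem_bot] at hz
    refine ⟨z, ?_⟩
    rw [← sub_eq_zero]
    calc z * (1 + y*j) - 1 = z * y * j + z - 1 := by noncomm_ring
    _ = 0 := hz
  intro r
  obtain ⟨z, hz⟩ := key r
  have hz' : z = 1 + (-(z*r))*j := by
    have h' : z + z * (r * j) = 1 := by rw [← hz]; noncomm_ring
    calc z = (z + z * (r*j)) - z*(r*j) := by noncomm_ring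
    _ = 1 + (-(z*r))*j := by rw [h']; noncomm_ring
  obtain ⟨z₂, hz₂⟩ := key (-(z*r))
  rw [← hz'] at hz₂
  have hright : (1 + r*j) * z = 1 := by
    calc (1+r*j)*z = (z₂*z)*((1+r*j)*z) := by rw [hz₂, one_mul]
    _ = z₂*(z*(1+r*j))*z := by noncomm_ring
    _ = 1 := by rw [hz, mul_one, hz₂]
  exact isUnit_iff_exists.mpr ⟨z, hright, hz⟩

section Recover
variable {R : Type*} [Ring R]

theorem recover {k : R} (hk : ∀ r : R, IsUnit (1 + r * k)) (x : R) :
    x = (Ring.inverse (1+x*k)*x) * Ring.inverse (1 - k*(Ring.inverse (1+x*k)*x)) := by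
  set v := Ring.inverse (1+x*k) with hv
  have hu : IsUnit (1+x*k) := hk x
  have huv : (1+x*k)*v = 1 := Ring.mul_inverse_cancel _ hu
  have hxy : x = (v*x) + x*(k*(v*x)) := by
    calc x = ((1+x*k)*v)*x := by rw [huv, one_mul]
    _ = (v*x) + x*(k*(v*x)) := by noncomm_ring
  have hx1 : x * (1 - k*(v*x)) = v*x := by
    rw [mul_sub, mul_one]
    calc x - x*(k*(v*x)) = ((v*x) + x*(k*(v*x))) - x*(k*(v*x)) := by rw [← hxy]
    _ = v*x := by noncomm_ring
  have hun : IsUnit (1 - k*(v*x)) := by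
    have h0 := unit_kr hk (-(v*x))
    have heq : (1:R) + k*(-(v*x)) = 1 - k*(v*x) := by noncomm_ring
    rwa [heq] at h0
  calc x = x * ((1 - k*(v*x)) * Ring.inverse (1 - k*(v*x))) := by
        rw [Ring.mul_inverse_cancel _ hun, mul_one]
  _ = (x*(1 - k*(v*x))) * Ring.inverse (1 - k*(v*x)) := by noncomm_ring
  _ = (v*x) * Ring.inverse (1 - k*(v*x)) := by rw [hx1]

end Recover


/-- if `a` has a group invertible reflexive inverse `a⁺` (so `a` is
special clean) and `j` is in the Jacobson radical, then (1) `a + j` is special clean ↔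
(2) `a + j` is regular ↔ (3) `(1 - a a⁺) j (1 + a⁺ j)⁻¹ (1 - a⁺ a) = 0`; in this case
`(1 + a⁺ j)⁻¹ a⁺` is a group invertible reflexive inverse of `a + j` and
`x ↦ (1 + x j)⁻¹ x` is a bijection from the set of group invertible reflexive inverses
of `a` onto the set of group invertible reflexive inverses of `a + j`. -/
theorem stmt13 {R : Type*} [Ring R] (a ap j : R)
    (hj : j ∈ Ideal.jacobson (⊥ : Ideal R))
    (hap : a * ap * a = a ∧ ap * a * ap = ap)
    (hapg : ∃ g, IsGroupInverse ap g) :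
    (IsSpecialClean (a + j) ↔ (∃ x, (a + j) * x * (a + j) = a + j)) ∧
    (IsSpecialClean (a + j) ↔
      (1 - a * ap) * j * Ring.inverse (1 + ap * j) * (1 - ap * a) = 0) ∧
    ((1 - a * ap) * j * Ring.inverse (1 + ap * j) * (1 - ap * a) = 0 →
      ((a + j) * (Ring.inverse (1 + ap * j) * ap) * (a + j) = a + j ∧
       (Ring.inverse (1 + ap * j) * ap) * (a + j) * (Ring.inverse (1 + ap * j) * ap)
         = Ring.inverse (1 + ap * j) * ap ∧
       (∃ g, IsGroupInverse (Ring.inverse (1 + ap * j) * ap) g)) ∧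
      Set.BijOn (fun x : R => Ring.inverse (1 + x * j) * x)
        {x : R | a * x * a = a ∧ x * a * x = x ∧ ∃ g, IsGroupInverse x g}
        {y : R | (a + j) * y * (a + j) = a + j ∧ y * (a + j) * y = y ∧
          ∃ g, IsGroupInverse y g}) := by
  obtain ⟨hap1, hap2⟩ := hap
  obtain ⟨g, hg⟩ := hapg
  have hk : ∀ r : R, IsUnit (1 + r * j) := jac_units hj
  have W_of_reg : (∃ z, (a+j)*z*(a+j) = a+j) →
      (1 - a*ap)*j*Ring.inverse (1+ap*j)*(1-ap*a) = 0 := by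
    rintro ⟨z, hz⟩
    exact mainC hk hap1 hap2 z hz
  have reg_of_W : (1 - a*ap)*j*Ring.inverse (1+ap*j)*(1-ap*a) = 0 →
      (a+j)*(Ring.inverse (1+ap*j)*ap)*(a+j) = a+j := by
    intro hW
    have hB := mainB (x := ap) hk hap1
    rw [hW, sub_zero] at hB
    exact hB
  have sc_of_W : (1 - a*ap)*j*Ring.inverse (1+ap*j)*(1-ap*a) = 0 →
      IsSpecialClean (a+j) := by
    intro hW
    exact sc_of_refl_grp (reg_of_W hW) (mainA hk hap2) (mainE hk g hg.1 hg.2.1 hg.2.2)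
  refine ⟨⟨fun hsc => reg_of_sc hsc, fun hreg => sc_of_W (W_of_reg hreg)⟩,
    ⟨fun hsc => W_of_reg (reg_of_sc hsc), fun hW => sc_of_W hW⟩, ?_⟩
  intro hW
  refine ⟨⟨reg_of_W hW, mainA hk hap2, ⟨_, mainE hk g hg.1 hg.2.1 hg.2.2⟩⟩, ?_, ?_, ?_⟩
  · -- MapsTo
    rintro x ⟨hx1, hx2, gx, hgx⟩
    have hWx : (1-a*x)*j*Ring.inverse (1+x*j)*(1-x*a) = 0 :=
      mainC hk hx1 hx2 _ (reg_of_W hW)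
    have hinner : (a+j)*(Ring.inverse (1+x*j)*x)*(a+j) = a+j := by
      have hB := mainB (x := x) hk hx1
      rw [hWx, sub_zero] at hB
      exact hB
    exact ⟨hinner, mainA hk hx2, ⟨_, mainE hk gx hgx.1 hgx.2.1 hgx.2.2⟩⟩
  · -- InjOn
    rintro x1 _ x2 _ heq
    simp only at heq
    calc x1 = (Ring.inverse (1+x1*j)*x1) * Ring.inverse (1 - j*(Ring.inverse (1+x1*j)*x1)) :=
          recover hk x1
    _ = (Ring.inverse (1+x2*j)*x2) * Ring.inverse (1 - j*(Ring.inverse (1+x2*j)*x2)) := by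
          rw [heq]
    _ = x2 := (recover hk x2).symm
  · -- SurjOn
    rintro y ⟨hy1, hy2, gy, hgy⟩
    have hk' : ∀ r : R, IsUnit (1 + r * (-j)) := by
      intro r
      have h0 := hk (-r)
      have he : (1:R) + (-r)*j = 1 + r*(-j) := by noncomm_ring
      rwa [he] at h0
    have hsum : a + j + -j = a := by abel
    have hrega : ((a+j) + -j) * ap * ((a+j) + -j) = (a+j) + -j := by
      rw [hsum]; exact hap1
    have hWy : (1-(a+j)*y)*(-j)*Ring.inverse (1+y*(-j))*(1-y*(a+j)) = 0 :=
      mainC hk' hy1 hy2 ap hrega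
    have hinner : a * (Ring.inverse (1+y*(-j))*y) * a = a := by
      have hB := mainB (x := y) hk' hy1
      rw [hWy, sub_zero, hsum] at hB
      exact hB
    have hrefl : (Ring.inverse (1+y*(-j))*y) * a * (Ring.inverse (1+y*(-j))*y)
        = Ring.inverse (1+y*(-j))*y := by
      have hA := mainA hk' hy2
      rw [hsum] at hA
      exact hA
    have hgrp := mainE hk' gy hgy.1 hgy.2.1 hgy.2.2
    refine ⟨Ring.inverse (1+y*(-j))*y, ⟨hinner, hrefl, ⟨_, hgrp⟩⟩, ?_⟩
    have htrans : Ring.inverse (1+(Ring.inverse (1+y*(-j))*y)*j)*(Ring.inverse (1+y*(-j))*y)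
        = (Ring.inverse (1+y*(-j))*y) * Ring.inverse (1+j*(Ring.inverse (1+y*(-j))*y)) :=
      inv_transport _ (hk _) (unit_kr hk _) (by noncomm_ring)
    have hrec := recover hk' y
    have he2 : (1:R) - (-j)*(Ring.inverse (1+y*(-j))*y) = 1 + j*(Ring.inverse (1+y*(-j))*y) := by
      noncomm_ring
    rw [he2] at hrec
    show Ring.inverse (1+(Ring.inverse (1+y*(-j))*y)*j)*(Ring.inverse (1+y*(-j))*y) = y
    rw [htrans, ← hrec]
end
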